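/- Let G be a finitely generated free group and α : G → G an endomorphism. Set F_n := im(α^n) and r_n := rank(F_n). Then the sequence (r_n) is nonincreasing, and if r_n = r_{n+1} for some n, then r_m = r_n for all m ≥ n. Consequently (r_n) is strictly decreasing until its first repetition at some stage m ≤ rank(G), after which it is constant. -/

import Mathlib

/-- The rank of a free group: the cardinality of a basis. -/
noncomputable def freeRank (H : Type*) [Group H] [IsFreeGroup H] : ℕ :=
  Nat.card (IsFreeGroup.Generators H)

/-- The `n`-th iterate `α ^ n` of an endomorphism. -/
def iterHom {G : Type*} [Group G] (α : G →* G) : ℕ → (G →* G)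
  | 0 => MonoidHom.id G
  | (n + 1) => α.comp (iterHom α n)

open Function List

namespace HopfAux

open scoped Classical

variable {α : Type*} [DecidableEq α]

lemma adj {l : List (α × Bool)} (hred : FreeGroup.reduce l = l) {i : ℕ} (h : i + 1 < l.length)
    {a : α} {b : Bool} (h1 : l[i] = (a, b)) (h2 : l[i + 1] = (a, !b)) : False := by
  have hd : l = l.take i ++ (a, b) :: (a, !b) :: l.drop (i + 2) := by
    conv_lhs => rw [← List.take_append_drop i l]
    congr 1
    rw [List.drop_eq_getElem_cons (by omega), h1,
      List.drop_eq_getElem_cons h, h2]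
  exact FreeGroup.reduce.not (hred.trans hd)

lemma adj' {l : List (α × Bool)} (hred : FreeGroup.reduce l = l) {i j : ℕ}
    (hj : j < l.length) (hij : j = i + 1)
    {a : α} {b : Bool} (h1 : l[i]'(by omega) = (a, b)) (h2 : l[j] = (a, !b)) : False := by
  subst hij
  exact adj hred hj h1 h2

variable (l : List (α × Bool))

def P1 (a : α) (u : Fin (l.length + 1)) : Prop :=
  ∃ (_ : 1 ≤ u.val), l[u.val - 1]'(by have := u.isLt; omega) = (a, true)

def P2 (a : α) (u : Fin (l.length + 1)) : Prop :=
  ∃ (h : u.val < l.length), l[u.val]'h = (a, false)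

/-- The partial motion associated to the letter `a` for the word `l`. -/
noncomputable def fa (a : α) (u : Fin (l.length + 1)) : Fin (l.length + 1) :=
  if h1 : P1 l a u then ⟨u.val - 1, by have := u.isLt; omega⟩
  else if h2 : P2 l a u then ⟨u.val + 1, by obtain ⟨h, -⟩ := h2; omega⟩
  else u

lemma not_P1_P2 {a : α} {u : Fin (l.length + 1)} (hred : FreeGroup.reduce l = l)
    (h1 : P1 l a u) (h2 : P2 l a u) : False := by
  obtain ⟨hu1, e1⟩ := h1
  obtain ⟨hu2, e2⟩ := h2
  exact adj' hred (i := u.val - 1) hu2 (by omega) e1 e2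

lemma injOn_fa {a : α} (hred : FreeGroup.reduce l = l) :
    Set.InjOn (fa l a) {u | P1 l a u ∨ P2 l a u} := by
  rintro u hu v hv huv
  simp only [Set.mem_setOf_eq] at hu hv
  unfold fa at huv
  rcases hu with h1u | h2u
  · rw [dif_pos h1u] at huv
    obtain ⟨hu1, e1⟩ := h1u
    rcases hv with h1v | h2v
    · rw [dif_pos h1v] at huv
      obtain ⟨hv1, _⟩ := h1v
      simp only [Fin.ext_iff] at huv ⊢
      omega
    · rw [dif_neg (fun h1v => not_P1_P2 l hred h1v h2v), dif_pos h2v] at huv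
      obtain ⟨hv2, e2⟩ := h2v
      simp only [Fin.ext_iff] at huv
      exact absurd e1 (fun e1' => adj' hred (i := v.val) (j := u.val - 1) (by omega)
        (by omega) e2 e1')
  · rw [dif_neg (fun h1u => not_P1_P2 l hred h1u h2u), dif_pos h2u] at huv
    obtain ⟨hu2, e2⟩ := h2u
    rcases hv with h1v | h2v
    · rw [dif_pos h1v] at huv
      obtain ⟨hv1, e1⟩ := h1v
      simp only [Fin.ext_iff] at huv
      exact absurd e1 (fun e1' => adj' hred (i := u.val) (j := v.val - 1) (by omega)
        (by omega) e2 e1')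
    · rw [dif_neg (fun h1v => not_P1_P2 l hred h1v h2v), dif_pos h2v] at huv
      simp only [Fin.ext_iff] at huv ⊢
      omega

noncomputable def sigma (hred : FreeGroup.reduce l = l) (a : α) :
    Equiv.Perm (Fin (l.length + 1)) :=
  (Finset.exists_equiv_extend_of_card_eq
    (by simp : Fintype.card (Fin (l.length + 1)) = (Finset.univ : Finset (Fin (l.length + 1))).card)
    (Finset.subset_univ (Finset.image (fa l a) {u | P1 l a u ∨ P2 l a u}.toFinset))
    (by simpa using injOn_fa l hred)).choose.trans
    (Equiv.subtypeUnivEquiv (fun x => Finset.mem_univ x))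

lemma sigma_spec (hred : FreeGroup.reduce l = l) (a : α) (u : Fin (l.length + 1))
    (hu : P1 l a u ∨ P2 l a u) : sigma l hred a u = fa l a u := by
  have h := (Finset.exists_equiv_extend_of_card_eq
    (by simp : Fintype.card (Fin (l.length + 1)) = (Finset.univ : Finset (Fin (l.length + 1))).card)
    (Finset.subset_univ (Finset.image (fa l a) {u | P1 l a u ∨ P2 l a u}.toFinset))
    (by simpa using injOn_fa l hred)).choose_spec u (by simpa using hu)
  simpa [sigma] using h

variable (hred : FreeGroup.reduce l = l)

lemma c1 {a : α} {i : ℕ} (h : i < l.length) (he : l[i] = (a, true)) :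
    sigma l hred a ⟨i + 1, Nat.add_lt_add_right h 1⟩ = ⟨i, Nat.lt_succ_of_lt h⟩ := by
  have hp1 : P1 l a ⟨i + 1, Nat.add_lt_add_right h 1⟩ :=
    ⟨Nat.succ_le_succ (Nat.zero_le i), by simpa using he⟩
  rw [sigma_spec l hred a _ (Or.inl hp1), fa, dif_pos hp1]
  exact Fin.ext (by simp)

lemma c2 {a : α} {i : ℕ} (h : i < l.length) (he : l[i] = (a, false)) :
    sigma l hred a ⟨i, Nat.lt_succ_of_lt h⟩ = ⟨i + 1, Nat.add_lt_add_right h 1⟩ := by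
  have hp2 : P2 l a ⟨i, Nat.lt_succ_of_lt h⟩ := ⟨h, he⟩
  have hp1 : ¬ P1 l a ⟨i, Nat.lt_succ_of_lt h⟩ := by
    rintro ⟨h1, he1⟩
    exact adj' hred (j := i) h (by simp only [Fin.val_mk] at h1 ⊢; omega) he1 he
  rw [sigma_spec l hred a _ (Or.inr hp2), fa, dif_neg hp1, dif_pos hp2]

lemma main_comp : ∀ (d k : ℕ) (hk : k + d = l.length),
    (FreeGroup.lift (sigma l hred) (FreeGroup.mk (l.drop k)))
      ⟨l.length, Nat.lt_succ_self _⟩ = ⟨k, by omega⟩ := by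
  intro d
  induction d with
  | zero =>
    intro k hk
    rw [List.drop_eq_nil_of_le (by omega)]
    show (FreeGroup.lift (sigma l hred) 1) _ = _
    simp only [map_one, Equiv.Perm.coe_one, id_eq]
    exact Fin.ext (by simp only [Fin.val_mk]; omega)
  | succ d ih =>
    intro k hk
    have hkl : k < l.length := by omega
    rw [List.drop_eq_getElem_cons hkl]
    rcases hab : l[k] with ⟨a, b⟩
    have hsplit : FreeGroup.mk ((a, b) :: l.drop (k + 1)) =
        FreeGroup.mk [(a, b)] * FreeGroup.mk (l.drop (k + 1)) := by
      rw [FreeGroup.mul_mk]; rfl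
    rw [hsplit, map_mul, Equiv.Perm.mul_apply, ih (k + 1) (by omega)]
    have hone : FreeGroup.lift (sigma l hred) (FreeGroup.mk [(a, b)]) =
        cond b (sigma l hred a) (sigma l hred a)⁻¹ := by
      rw [FreeGroup.lift_mk]
      cases b <;> simp
    rw [hone]
    cases b with
    | true =>
      simpa using c1 l hred hkl hab
    | false =>
      have h2 := c2 l hred hkl hab
      simp only [cond_false]
      rw [show (⟨k + 1, by omega⟩ : Fin (l.length + 1)) = sigma l hred a ⟨k, by omega⟩ from h2.symm]
      exact Equiv.symm_apply_apply _ _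

/-- Residual finiteness of free groups. -/
theorem exists_finite_quotient (w : FreeGroup α) (hw : w ≠ 1) :
    ∃ (n : ℕ) (f : FreeGroup α →* Equiv.Perm (Fin (n + 1))), f w ≠ 1 := by
  have hred : FreeGroup.reduce w.toWord = w.toWord := FreeGroup.reduce_toWord w
  have hlen : w.toWord.length ≠ 0 := by
    simp only [ne_eq, List.length_eq_zero_iff, FreeGroup.toWord_eq_nil_iff]
    exact hw
  refine ⟨w.toWord.length, FreeGroup.lift (sigma w.toWord hred), fun hcon => ?_⟩
  have := main_comp w.toWord hred w.toWord.length 0 (by omega)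
  rw [List.drop_zero, FreeGroup.mk_toWord] at this
  rw [hcon] at this
  simp only [Equiv.Perm.coe_one, id_eq, Fin.ext_iff] at this
  omega

/-- Finitely generated free groups are Hopfian. -/
theorem freeGroup_hopfian [Finite α] (φ : FreeGroup α →* FreeGroup α)
    (hs : Surjective φ) : Injective φ := by
  rw [injective_iff_map_eq_one]
  intro w hwker
  by_contra hw
  obtain ⟨n, π, hπ⟩ := exists_finite_quotient w hw
  have : Finite (FreeGroup α →* Equiv.Perm (Fin (n + 1))) :=
    Finite.of_equiv _ FreeGroup.lift
  have hinj : Injective (fun h : FreeGroup α →* Equiv.Perm (Fin (n + 1)) => h.comp φ) := by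
    intro h1 h2 hh
    refine MonoidHom.ext fun x => ?_
    obtain ⟨y, rfl⟩ := hs x
    exact DFunLike.congr_fun hh y
  obtain ⟨h, hh⟩ := Finite.injective_iff_surjective.mp hinj π
  apply hπ
  have := DFunLike.congr_fun hh w
  simp only [MonoidHom.comp_apply] at this
  rw [← this, hwker, map_one]

open IsFreeGroup

/-- Finitely generated free groups are Hopfian (`IsFreeGroup` version). -/
theorem hopfian {H : Type*} [Group H] [IsFreeGroup H] [Finite (Generators H)]
    (φ : H →* H) (hs : Surjective φ) : Injective φ := by
  classical
  set e := IsFreeGroup.toFreeGroup H with he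
  set ψ : FreeGroup (Generators H) →* FreeGroup (Generators H) :=
    (e.toMonoidHom.comp φ).comp e.symm.toMonoidHom with hψ
  have hψs : Surjective ψ := by
    intro x
    obtain ⟨y, hy⟩ := hs (e.symm x)
    exact ⟨e y, by simp [hψ, hy]⟩
  have hψi : Injective ψ := freeGroup_hopfian ψ hψs
  intro x y hxy
  have : ψ (e x) = ψ (e y) := by simp [hψ, hxy]
  simpa using hψi this

/-- Rank is invariant under isomorphism. -/
lemma freeRank_eq_of_mulEquiv {H K : Type*} [Group H] [Group K] [IsFreeGroup H] [IsFreeGroup K]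
    (e : H ≃* K) : freeRank H = freeRank K :=
  Nat.card_congr (Equiv.ofIsFreeGroupEquiv e)

/-- A free group that is the image of a finitely generated free group has smaller or
equal rank (and is finitely generated). -/
lemma finite_gens_and_freeRank_le {H K : Type u} [Group H] [Group K]
    [IsFreeGroup H] [IsFreeGroup K] [Finite (Generators H)]
    (ψ : H →* K) (hs : Surjective ψ) :
    Finite (Generators K) ∧ freeRank K ≤ freeRank H := by
  classical
  set χ : FreeGroup (Generators H) →* FreeGroup (Generators K) :=
    ((toFreeGroup K).toMonoidHom.comp ψ).comp (toFreeGroup H).symm.toMonoidHom with hχ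
  have hχs : Surjective χ := by
    intro x
    obtain ⟨y, hy⟩ := hs ((toFreeGroup K).symm x)
    exact ⟨toFreeGroup H y, by simp [hχ, hy]⟩
  have hofs : ∀ (β : Type u) (z : Abelianization (FreeGroup β)),
      ∃ g, Abelianization.of g = z := by
    intro β z
    exact QuotientGroup.induction_on z fun g => ⟨g, rfl⟩
  have habs : Surjective (Abelianization.map χ) := by
    intro z
    obtain ⟨c, rfl⟩ := hofs _ z
    obtain ⟨b, rfl⟩ := hχs c
    exact ⟨Abelianization.of b, Abelianization.lift_apply_of _ _⟩
  -- pass to ℤ-linear maps between free abelian groups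
  set Λ : FreeAbelianGroup (Generators H) →ₗ[ℤ] FreeAbelianGroup (Generators K) :=
    (MonoidHom.toAdditive (Abelianization.map χ)).toIntLinearMap with hΛ
  have hΛs : Surjective Λ := fun z => habs z
  have hrank : Module.rank ℤ (FreeAbelianGroup (Generators K)) ≤
      Module.rank ℤ (FreeAbelianGroup (Generators H)) :=
    LinearMap.rank_le_of_surjective Λ hΛs
  rw [← (FreeAbelianGroup.basis (Generators K)).mk_eq_rank'',
    ← (FreeAbelianGroup.basis (Generators H)).mk_eq_rank''] at hrank
  have hBfin : Cardinal.mk (Generators H) < Cardinal.aleph0 := by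
    exact Cardinal.mk_lt_aleph0_iff.mpr ‹_›
  have hCfin : Finite (Generators K) :=
    Cardinal.mk_lt_aleph0_iff.mp (lt_of_le_of_lt hrank hBfin)
  refine ⟨hCfin, ?_⟩
  have := Cardinal.toNat_le_toNat hrank hBfin
  simpa [freeRank, Nat.card] using this

end HopfAux

theorem rank_iterates_strict_anti_then_const {G : Type u} [Group G] [IsFreeGroup G]
    [Finite (IsFreeGroup.Generators G)] (α : G →* G)
    (r : ℕ → ℕ) (hr : ∀ n, r n = freeRank (iterHom α n).range) :
    Antitone r ∧ (∀ n, r n = r (n + 1) → ∀ m, n ≤ m → r m = r n) ∧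
      ∃ m, m ≤ freeRank G ∧ (∀ i, i + 1 ≤ m → r (i + 1) < r i) ∧
        ∀ j, m ≤ j → r j = r m := by
  classical
  set F : ℕ → Subgroup G := fun n => (iterHom α n).range with hF
  have hsurjG : ∀ n, Surjective ((iterHom α n).rangeRestrict) := fun n =>
    MonoidHom.rangeRestrict_surjective _
  have hfin : ∀ n, Finite (IsFreeGroup.Generators ↥(F n)) ∧ freeRank ↥(F n) ≤ freeRank G :=
    fun n => HopfAux.finite_gens_and_freeRank_le (iterHom α n).rangeRestrict (hsurjG n)
  have hkey : ∀ n, F (n + 1) = (F n).map α := fun n => MonoidHom.range_comp α (iterHom α n)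
  have hcomm : ∀ n, iterHom α (n + 1) = (iterHom α n).comp α := by
    intro n
    induction n with
    | zero => rfl
    | succ n ih =>
      show α.comp (iterHom α (n + 1)) = (α.comp (iterHom α n)).comp α
      rw [ih, MonoidHom.comp_assoc]
  have hmono : ∀ n, F (n + 1) ≤ F n := by
    intro n g hg
    obtain ⟨x, hx⟩ := MonoidHom.mem_range.mp hg
    exact MonoidHom.mem_range.mpr ⟨α x, by
      rw [← MonoidHom.comp_apply, ← hcomm n]; exact hx⟩
  set ψ : ∀ n, ↥(F n) →* ↥(F (n + 1)) := fun n =>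
    (MulEquiv.subgroupCongr (hkey n).symm).toMonoidHom.comp (α.subgroupMap (F n)) with hψ
  have hψs : ∀ n, Surjective (ψ n) := fun n =>
    (MulEquiv.subgroupCongr (hkey n).symm).surjective.comp
      (MonoidHom.subgroupMap_surjective α (F n))
  have hψcoe : ∀ n (x : ↥(F n)), ((ψ n x : ↥(F (n + 1))) : G) = α (x : G) := fun n x => rfl
  have hanti : Antitone r := by
    apply antitone_nat_of_succ_le
    intro n
    rw [hr n, hr (n + 1)]
    haveI := (hfin n).1
    exact (HopfAux.finite_gens_and_freeRank_le (ψ n) (hψs n)).2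
  have hstep : ∀ n, r n = r (n + 1) → r (n + 1) = r (n + 2) := by
    intro n h
    haveI h0 := (hfin n).1
    haveI h1 := (hfin (n + 1)).1
    haveI h2 := (hfin (n + 2)).1
    have hcard : Nat.card (IsFreeGroup.Generators ↥(F (n + 1))) =
        Nat.card (IsFreeGroup.Generators ↥(F n)) := by
      have : freeRank ↥(F (n + 1)) = freeRank ↥(F n) := by
        rw [← hr (n + 1), ← hr n, h]
      simpa [freeRank] using this
    obtain ⟨gequiv⟩ : Nonempty
        (IsFreeGroup.Generators ↥(F (n + 1)) ≃ IsFreeGroup.Generators ↥(F n)) := by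
      haveI := Fintype.ofFinite (IsFreeGroup.Generators ↥(F (n + 1)))
      haveI := Fintype.ofFinite (IsFreeGroup.Generators ↥(F n))
      refine ⟨Fintype.equivOfCardEq ?_⟩
      rw [← Nat.card_eq_fintype_card, ← Nat.card_eq_fintype_card]
      exact hcard
    set e : ↥(F (n + 1)) ≃* ↥(F n) :=
      (IsFreeGroup.toFreeGroup _).trans ((FreeGroup.freeGroupCongr gequiv).trans
        (IsFreeGroup.toFreeGroup _).symm) with hee
    have hΦs : Surjective (e.toMonoidHom.comp (ψ n)) := e.surjective.comp (hψs n)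
    have hΦi := HopfAux.hopfian _ hΦs
    have hψinj : Injective (ψ n) := fun x y hxy => hΦi (by
      simp only [MonoidHom.comp_apply, hxy])
    have hαinj : ∀ x y : G, x ∈ F n → y ∈ F n → α x = α y → x = y := by
      intro x y hx hy hxy
      have := hψinj (a₁ := ⟨x, hx⟩) (a₂ := ⟨y, hy⟩) (by
        apply Subtype.ext
        rw [hψcoe, hψcoe]
        exact hxy)
      exact congrArg Subtype.val this
    have hψ1inj : Injective (ψ (n + 1)) := by
      intro x y hxy
      apply Subtype.ext
      refine hαinj x y (hmono n x.2) (hmono n y.2) ?_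
      have := congrArg Subtype.val hxy
      rwa [hψcoe, hψcoe] at this
    have eiso : ↥(F (n + 1)) ≃* ↥(F (n + 2)) :=
      MulEquiv.ofBijective (ψ (n + 1)) ⟨hψ1inj, hψs (n + 1)⟩
    rw [hr (n + 1), hr (n + 2)]
    exact HopfAux.freeRank_eq_of_mulEquiv eiso
  have hkeyconst : ∀ n, r n = r (n + 1) → ∀ k, r (n + k) = r n ∧ r (n + k) = r (n + k + 1) := by
    intro n h k
    induction k with
    | zero => exact ⟨rfl, h⟩
    | succ k ih =>
      have e1 : r (n + k + 1) = r (n + k) := ih.2.symm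
      exact ⟨e1.trans ih.1, hstep (n + k) ih.2⟩
  have hstab : ∀ n, r n = r (n + 1) → ∀ m, n ≤ m → r m = r n := by
    intro n h m hnm
    have := (hkeyconst n h (m - n)).1
    rwa [Nat.add_sub_cancel' hnm] at this
  have hr0 : r 0 = freeRank G := by
    rw [hr 0]
    refine (HopfAux.freeRank_eq_of_mulEquiv ?_ : freeRank ↥(F 0) = freeRank G)
    exact (MulEquiv.subgroupCongr (MonoidHom.range_eq_top_of_surjective (iterHom α 0)
      (fun x => ⟨x, rfl⟩))).trans Subgroup.topEquiv
  have hex : ∃ k, r k = r (k + 1) := by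
    by_contra hc
    push_neg at hc
    have hdec : ∀ k, r (k + 1) < r k := fun k =>
      lt_of_le_of_ne (hanti (Nat.le_succ k)) (fun he => hc k he.symm)
    have hb : ∀ k, r k + k ≤ r 0 := by
      intro k
      induction k with
      | zero => simp
      | succ k ih =>
        have := hdec k
        omega
    have := hb (r 0 + 1)
    omega
  refine ⟨hanti, hstab, Nat.find hex, ?_, ?_, ?_⟩
  · have h1 : ∀ i, i < Nat.find hex → r (i + 1) < r i := fun i hi =>
      lt_of_le_of_ne (hanti (Nat.le_succ i)) (fun he => (Nat.find_min hex hi) he.symm)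
    have hb : ∀ k, k ≤ Nat.find hex → r k + k ≤ r 0 := by
      intro k
      induction k with
      | zero => simp
      | succ k ih =>
        intro hk
        have := h1 k (by omega)
        have := ih (by omega)
        omega
    have := hb (Nat.find hex) le_rfl
    rw [← hr0]
    omega
  · intro i hi
    exact lt_of_le_of_ne (hanti (Nat.le_succ i)) (fun he => (Nat.find_min hex (by omega)) he.symm)
  · intro j hj
    exact hstab (Nat.find hex) (Nat.find_spec hex) j hj
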